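/- arXiv:1211.3820 — 2 statements merged into one kernel-verified Lean document; each statement's English description precedes it below -/
import Mathlib

section
/- (Uniqueness for the monotone ODE-type backward equation.) Let d₁ : [0,T] → ℝ be integrable and f : [0,T] × ℝ → ℝ satisfy (y₁ − y₂)(f(s,y₁) − f(s,y₂)) ≤ −d₁(s)|y₁ − y₂|² for a.e. s. If y¹, y² : [0,T] → ℝ are absolutely continuous functions with yⁱ(t) = ξ + ∫_t^T f(s, yⁱ(s)) ds for i = 1, 2, then y¹ = y². -/
/-!
The difference `z = y₁ - y₂` satisfies `z t = ∫_t^T g` with `g = f(·, y₁) - f(·, y₂)`, so `z` is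
absolutely continuous with `z' = -g` a.e. and `z(t)² = 2 ∫_t^T g z`. Monotonicity gives
`g z ≤ |d₁| z²`, hence `u = z²` satisfies the backward Gronwall inequality
`u t ≤ ∫_t^T 2|d₁| u` with an integrable kernel. Such a `u` vanishes: on an interval `[b, a]`
where the kernel has mass `< 1` and beyond which `u` already vanishes, the maximum `M` of `u`
satisfies `M ≤ M · mass`; intervals of uniformly small mass cover `[0, T]` by the absolute
continuity of the integral.
-/

open MeasureTheory intervalIntegral Set

theorem sq_intervalIntegral_eq_two_mul_integral_mul {g : ℝ → ℝ} {a b : ℝ}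
    (hg : IntervalIntegrable g volume a b) :
    (∫ s in a..b, g s) ^ 2 = 2 * ∫ s in a..b, g s * ∫ r in s..b, g r := by
  let F : ℝ → ℝ := fun x => ∫ r in b..x, g r
  have hFac : AbsolutelyContinuousOnInterval F a b :=
    hg.absolutelyContinuousOnInterval_intervalIntegral right_mem_uIcc
  have hderiv : ∀ᵐ x, x ∈ uIoc a b →
      deriv F x * F x + F x * deriv F x = 2 * (g x * F x) := by
    filter_upwards [hg.ae_hasDerivAt_integral] with x hx hxab
    rw [(hx (uIoc_subset_uIcc hxab) b right_mem_uIcc).deriv]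
    ring
  have key := hFac.integral_deriv_mul_eq_sub hFac
  rw [integral_congr_ae hderiv, intervalIntegral.integral_const_mul] at key
  have hF : ∀ s, F s = -∫ r in s..b, g r := fun s => integral_symm s b
  simp only [hF, mul_neg, intervalIntegral.integral_neg, integral_same, neg_zero] at key
  linear_combination key

theorem sq_le_integral_of_mul_le_mul_sq {z g K : ℝ → ℝ} {c T : ℝ}
    (hg : IntegrableOn g (Icc c T)) (hK : IntegrableOn K (Icc c T))
    (hzc : ContinuousOn z (Icc c T)) (hz : EqOn z (fun t => ∫ s in t..T, g s) (Icc c T))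
    (hzg : ∀ᵐ s ∂volume.restrict (Icc c T), z s * g s ≤ K s * z s ^ 2) :
    ∀ t ∈ Icc c T, z t ^ 2 ≤ ∫ s in t..T, 2 * K s * z s ^ 2 := by
  intro t ht
  have hsub : uIcc t T ⊆ Icc c T := uIcc_subset_Icc ht (right_mem_Icc.2 (ht.1.trans ht.2))
  have hzg_int : IntervalIntegrable (fun s => 2 * (z s * g s)) volume t T :=
    (IntegrableOn.mono_set ((hg.continuousOn_mul hzc isCompact_Icc).const_mul 2) hsub)
      |>.intervalIntegrable
  have hKz_int : IntervalIntegrable (fun s => 2 * K s * z s ^ 2) volume t T :=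
    (IntegrableOn.mul_continuousOn (hK.const_mul 2) (hzc.pow 2) isCompact_Icc).mono_set hsub
      |>.intervalIntegrable
  calc z t ^ 2 = 2 * ∫ s in t..T, g s * ∫ r in s..T, g r := by
        rw [hz ht]
        exact sq_intervalIntegral_eq_two_mul_integral_mul ((hg.mono_set hsub).intervalIntegrable)
    _ = ∫ s in t..T, 2 * (z s * g s) := by
        rw [← intervalIntegral.integral_const_mul]
        refine integral_congr fun s hs => ?_
        rw [hz (hsub hs)]
        ring
    _ ≤ ∫ s in t..T, 2 * K s * z s ^ 2 := by
        refine integral_mono_ae_restrict ht.2 hzg_int hKz_int ?_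
        filter_upwards [ae_restrict_of_ae_restrict_of_subset (hsub.trans' Icc_subset_uIcc) hzg]
          with s hs
        linarith

section Gronwall

variable {K u : ℝ → ℝ} {a b c T : ℝ}

theorem IntervalIntegrable.exists_pos_abs_integral_le (hK : IntervalIntegrable K volume c T)
    {ε : ℝ} (hε : 0 < ε) :
    ∃ δ > 0, ∀ a ∈ uIcc c T, ∀ b ∈ uIcc c T, dist a b ≤ δ → |∫ s in b..a, K s| ≤ ε := by
  obtain ⟨δ, hδ, hclose⟩ := Metric.uniformContinuousOn_iff_le.mp
    (hK.absolutelyContinuousOnInterval_intervalIntegral left_mem_uIcc).uniformContinuousOn ε hε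
  refine ⟨δ, hδ, fun a ha b hb hab => ?_⟩
  have hKa := hK.mono_set (uIcc_subset_uIcc left_mem_uIcc ha)
  have hKb := hK.mono_set (uIcc_subset_uIcc left_mem_uIcc hb)
  rw [← integral_interval_sub_left hKa hKb, ← Real.dist_eq]
  exact hclose a ha b hb hab

theorem eqOn_zero_of_le_integral_of_eqOn_zero (hK0 : ∀ s, 0 ≤ K s)
    (hK : IntegrableOn K (Icc b T)) (hu : ContinuousOn u (Icc b T))
    (hu0 : ∀ t ∈ Icc b T, 0 ≤ u t) (hineq : ∀ t ∈ Icc b T, u t ≤ ∫ s in t..T, K s * u s)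
    (hba : b ≤ a) (haT : a ≤ T) (hzero : EqOn u 0 (Ioc a T)) (hmass : ∫ s in b..a, K s < 1) :
    EqOn u 0 (Icc b T) := by
  obtain ⟨t₀, ht₀, hmax⟩ := isCompact_Icc.exists_isMaxOn (nonempty_Icc.2 (hba.trans haT)) hu
  have hKu : IntegrableOn (fun s => K s * u s) (Ioc b T) :=
    (hK.mul_continuousOn hu isCompact_Icc).mono_set Ioc_subset_Icc_self
  have hbound : u t₀ ≤ u t₀ * ∫ s in b..a, K s := calc
    u t₀ ≤ ∫ s in Ioc t₀ T, K s * u s := (hineq t₀ ht₀).trans_eq (integral_of_le ht₀.2)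
    _ ≤ ∫ s in Ioc b T, K s * u s := by
      refine setIntegral_mono_set hKu ?_ (Ioc_subset_Ioc_left ht₀.1).eventuallyLE
      exact (ae_restrict_iff' measurableSet_Ioc).2 <| .of_forall fun s hs =>
        mul_nonneg (hK0 s) (hu0 s (Ioc_subset_Icc_self hs))
    _ ≤ ∫ s in Ioc b T, (Ioc b a).indicator K s * u t₀ := by
      refine setIntegral_mono_on hKu ?_ measurableSet_Ioc fun s hs => ?_
      · exact ((hK.mono_set Ioc_subset_Icc_self).indicator measurableSet_Ioc).mul_const _
      by_cases hsa : s ≤ a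
      · rw [indicator_of_mem (show s ∈ Ioc b a from ⟨hs.1, hsa⟩)]
        exact mul_le_mul_of_nonneg_left (hmax (Ioc_subset_Icc_self hs)) (hK0 s)
      · rw [indicator_of_notMem fun h => hsa h.2, hzero ⟨not_le.1 hsa, hs.2⟩]
        simp
    _ = u t₀ * ∫ s in b..a, K s := by
      rw [MeasureTheory.integral_mul_const, setIntegral_indicator measurableSet_Ioc, Ioc_inter_Ioc,
        max_self, min_eq_right haT, integral_of_le hba, mul_comm]
  have hM : u t₀ ≤ 0 := by nlinarith [hu0 t₀ ht₀]
  exact fun t ht => le_antisymm ((hmax ht).trans hM) (hu0 t ht)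

theorem eqOn_zero_of_le_integral_mul (hK0 : ∀ s, 0 ≤ K s) (hK : IntegrableOn K (Icc c T))
    (hu : ContinuousOn u (Icc c T)) (hu0 : ∀ t ∈ Icc c T, 0 ≤ u t)
    (hineq : ∀ t ∈ Icc c T, u t ≤ ∫ s in t..T, K s * u s) :
    EqOn u 0 (Icc c T) := by
  rcases lt_or_ge T c with hTc | hcT
  · simp [Icc_eq_empty_of_lt hTc]
  obtain ⟨δ, hδ, hsmall⟩ := ((intervalIntegrable_iff_integrableOn_Icc_of_le hcT).2 hK)
    |>.exists_pos_abs_integral_le one_half_pos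
  rw [uIcc_of_le hcT] at hsmall
  let p : ℕ → ℝ := fun n => max (T - n * δ) c
  have hp : ∀ n, p n ∈ Icc c T := fun n =>
    ⟨le_max_right _ _, max_le (sub_le_self T (mul_nonneg n.cast_nonneg hδ.le)) hcT⟩
  have hstep : ∀ n, EqOn u 0 (Ioc (p n) T) → EqOn u 0 (Icc (p (n + 1)) T) := by
    intro n hzero
    have hsub : Icc (p (n + 1)) T ⊆ Icc c T := Icc_subset_Icc_left (hp (n + 1)).1
    have hdist : dist (p n) (p (n + 1)) ≤ δ := by
      rw [Real.dist_eq]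
      refine (abs_max_sub_max_le_abs _ _ _).trans ?_
      push_cast
      rw [show T - n * δ - (T - (n + 1) * δ) = δ by ring, abs_of_pos hδ]
    refine eqOn_zero_of_le_integral_of_eqOn_zero hK0 (hK.mono_set hsub) (hu.mono hsub)
      (fun t ht => hu0 t (hsub ht)) (fun t ht => hineq t (hsub ht)) ?_ (hp n).2 hzero ?_
    · exact max_le_max (by gcongr; simp) le_rfl
    · linarith [le_abs_self (∫ s in p (n + 1)..p n, K s), hsmall _ (hp n) _ (hp (n + 1)) hdist]
  have hzero : ∀ n, EqOn u 0 (Ioc (p n) T) := by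
    intro n
    induction n with
    | zero => simp [p, hcT]
    | succ n ih => exact (hstep n ih).mono Ioc_subset_Icc_self
  obtain ⟨n, hn⟩ := exists_nat_ge ((T - c) / δ)
  have hpc : p (n + 1) = c := by
    refine max_eq_right ?_
    push_cast
    linarith [(div_le_iff₀ hδ).1 hn]
  simpa [hpc] using hstep n (hzero n)

end Gronwall

theorem monotone_backward_equation_unique_general
    (T : ℝ) (ξ : ℝ)
    (d₁ : ℝ → ℝ) (hd₁ : IntegrableOn d₁ (Set.Icc 0 T))
    (f : ℝ → ℝ → ℝ)
    (hmono : ∀ᵐ s ∂(volume.restrict (Set.Icc (0 : ℝ) T)),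
      ∀ y₁ y₂ : ℝ, (y₁ - y₂) * (f s y₁ - f s y₂) ≤ -d₁ s * (y₁ - y₂) ^ 2)
    (y₁ y₂ : ℝ → ℝ)
    (hc₁ : ContinuousOn y₁ (Set.Icc 0 T)) (hc₂ : ContinuousOn y₂ (Set.Icc 0 T))
    (hint₁ : IntegrableOn (fun s => f s (y₁ s)) (Set.Icc 0 T))
    (hint₂ : IntegrableOn (fun s => f s (y₂ s)) (Set.Icc 0 T))
    (h₁ : ∀ t ∈ Set.Icc (0 : ℝ) T, y₁ t = ξ + ∫ s in t..T, f s (y₁ s))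
    (h₂ : ∀ t ∈ Set.Icc (0 : ℝ) T, y₂ t = ξ + ∫ s in t..T, f s (y₂ s)) :
    ∀ t ∈ Set.Icc (0 : ℝ) T, y₁ t = y₂ t := by
  have hrep : EqOn (y₁ - y₂) (fun t => ∫ s in t..T, (f s (y₁ s) - f s (y₂ s))) (Icc 0 T) := by
    intro t ht
    have hsub : uIcc t T ⊆ Icc 0 T := uIcc_subset_Icc ht (right_mem_Icc.2 (ht.1.trans ht.2))
    simp only [Pi.sub_apply]
    rw [h₁ t ht, h₂ t ht, intervalIntegral.integral_sub
      (hint₁.mono_set hsub).intervalIntegrable (hint₂.mono_set hsub).intervalIntegrable]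
    ring
  have hdiss : ∀ᵐ s ∂volume.restrict (Icc 0 T),
      (y₁ - y₂) s * (f s (y₁ s) - f s (y₂ s)) ≤ |d₁ s| * (y₁ - y₂) s ^ 2 := by
    filter_upwards [hmono] with s hs
    simp only [Pi.sub_apply]
    nlinarith [hs (y₁ s) (y₂ s), neg_le_abs (d₁ s), sq_nonneg (y₁ s - y₂ s)]
  have hzero := eqOn_zero_of_le_integral_mul (fun s => by positivity) (hd₁.abs.const_mul 2)
    ((hc₁.sub hc₂).pow 2) (fun t _ => sq_nonneg _)
    (sq_le_integral_of_mul_le_mul_sq (hint₁.sub hint₂) hd₁.abs (hc₁.sub hc₂) hrep hdiss)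
  intro t ht
  simpa [sub_eq_zero] using hzero ht

/-- Uniqueness for the monotone backward integral equation
`y(t) = ξ + ∫_t^T f(s, y(s)) ds` under the one-sided monotonicity condition
`(y₁ - y₂)(f(s,y₁) - f(s,y₂)) ≤ -d₁(s) |y₁ - y₂|²`. -/
theorem monotone_backward_equation_unique
    (T : ℝ) (hT : 0 < T) (ξ : ℝ)
    (d₁ : ℝ → ℝ) (hd₁ : IntegrableOn d₁ (Set.Icc 0 T))
    (f : ℝ → ℝ → ℝ)
    (hmono : ∀ᵐ s ∂(volume.restrict (Set.Icc (0 : ℝ) T)),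
      ∀ y₁ y₂ : ℝ, (y₁ - y₂) * (f s y₁ - f s y₂) ≤ -d₁ s * (y₁ - y₂) ^ 2)
    (y₁ y₂ : ℝ → ℝ)
    (hc₁ : ContinuousOn y₁ (Set.Icc 0 T)) (hc₂ : ContinuousOn y₂ (Set.Icc 0 T))
    (hint₁ : IntegrableOn (fun s => f s (y₁ s)) (Set.Icc 0 T))
    (hint₂ : IntegrableOn (fun s => f s (y₂ s)) (Set.Icc 0 T))
    (h₁ : ∀ t ∈ Set.Icc (0 : ℝ) T, y₁ t = ξ + ∫ s in t..T, f s (y₁ s))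
    (h₂ : ∀ t ∈ Set.Icc (0 : ℝ) T, y₂ t = ξ + ∫ s in t..T, f s (y₂ s)) :
    ∀ t ∈ Set.Icc (0 : ℝ) T, y₁ t = y₂ t :=
  monotone_backward_equation_unique_general T ξ d₁ hd₁ f hmono y₁ y₂ hc₁ hc₂ hint₁ hint₂ h₁ h₂
end

section
/- (A priori bound for the exponentially weighted square.) Let d, f : [0,T] → ℝ be integrable, and suppose y, z : [0,T] → ℝ are such that y is absolutely continuous with y(T) = ξ and y'(s) = −g(s), where g satisfies 2 y(s) g(s) ≤ d(s) y(s)² + |f(s)|² − z(s)² a.e. Then for all t ∈ [0,T], y(t)² e^{∫₀^t d(u)du} + ∫_t^T e^{∫₀^s d(u) du} z(s)² ds ≤ ξ² e^{∫₀^T d(u) du} + ∫_t^T e^{∫₀^s d(u) du} |f(s)|² ds. -/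
set_option maxHeartbeats 1000000


open MeasureTheory intervalIntegral

private lemma abs_add₄ (a b c d : ℝ) : |a + b + c + d| ≤ |a| + |b| + |c| + |d| := by
  calc |a + b + c + d| ≤ |a + b + c| + |d| := abs_add_le _ _
    _ ≤ |a + b| + |c| + |d| := by linarith [abs_add_le (a + b) c]
    _ ≤ |a| + |b| + |c| + |d| := by linarith [abs_add_le a b]

private lemma abs_mul_le' {x y A B : ℝ} (hx : |x| ≤ A) (hy : |y| ≤ B) (hA : 0 ≤ A) :
    |x * y| ≤ A * B := by
  rw [abs_mul]; exact mul_le_mul hx hy (abs_nonneg _) hA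

private lemma abs_intervalIntegral_le_global {r : ℝ → ℝ} (hr : Integrable r) (s b : ℝ) :
    |∫ u in s..b, r u| ≤ ∫ x, ‖r x‖ := by
  rw [← Real.norm_eq_abs]
  refine le_trans intervalIntegral.norm_integral_le_integral_norm_uIoc ?_
  exact setIntegral_le_integral hr.norm (Filter.Eventually.of_forall fun x => norm_nonneg _)

/-- FTC identity for continuous data. -/
private lemma key_cont (b c : ℝ) (p q : ℝ → ℝ) (hp : Continuous p) (hq : Continuous q)
    (a : ℝ) :
    (c + ∫ u in a..b, p u) ^ 2 * Real.exp (∫ u in a..b, q u) - c ^ 2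
      = ∫ s in a..b, (2 * (c + ∫ u in s..b, p u) * p s
          + (c + ∫ u in s..b, p u) ^ 2 * q s) * Real.exp (∫ u in s..b, q u) := by
  set P : ℝ → ℝ := fun s => c + ∫ u in s..b, p u with hPdef
  set Q : ℝ → ℝ := fun s => ∫ u in s..b, q u with hQdef
  show P a ^ 2 * Real.exp (Q a) - c ^ 2
      = ∫ s in a..b, (2 * P s * p s + P s ^ 2 * q s) * Real.exp (Q s)
  have hP : ∀ s, HasDerivAt P (-p s) s := by
    intro s
    have h1 : HasDerivAt (fun x => ∫ u in b..x, p u) (p s) s :=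
      intervalIntegral.integral_hasDerivAt_right (hp.intervalIntegrable b s)
        (hp.stronglyMeasurable.stronglyMeasurableAtFilter) hp.continuousAt
    have h2 : HasDerivAt (fun x => c - ∫ u in b..x, p u) (-p s) s := h1.const_sub c
    have h3 : P = fun x => c - ∫ u in b..x, p u := by
      funext x
      rw [hPdef]
      simp [intervalIntegral.integral_symm b x, sub_eq_add_neg]
    rw [h3]; exact h2
  have hQ : ∀ s, HasDerivAt Q (-q s) s := by
    intro s
    have h1 : HasDerivAt (fun x => ∫ u in b..x, q u) (q s) s :=
      intervalIntegral.integral_hasDerivAt_right (hq.intervalIntegrable b s)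
        (hq.stronglyMeasurable.stronglyMeasurableAtFilter) hq.continuousAt
    have h2 : HasDerivAt (fun x => (0 : ℝ) - ∫ u in b..x, q u) (-q s) s := h1.const_sub 0
    have h3 : Q = fun x => (0 : ℝ) - ∫ u in b..x, q u := by
      funext x
      rw [hQdef]
      simp [intervalIntegral.integral_symm b x, sub_eq_add_neg]
    rw [h3]; exact h2
  have hPc : Continuous P := continuous_iff_continuousAt.2 fun s => (hP s).continuousAt
  have hQc : Continuous Q := continuous_iff_continuousAt.2 fun s => (hQ s).continuousAt
  set φ' : ℝ → ℝ := fun s => -((2 * P s * p s + P s ^ 2 * q s) * Real.exp (Q s)) with hφ'def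
  have hφ : ∀ s, HasDerivAt (fun x => P x ^ 2 * Real.exp (Q x)) (φ' s) s := by
    intro s
    have h := ((hP s).pow 2).mul ((hQ s).exp)
    refine h.congr_deriv ?_
    rw [hφ'def]
    push_cast [Pi.pow_apply]
    ring
  have hcont : Continuous φ' := by
    rw [hφ'def]; fun_prop
  have hFTC := intervalIntegral.integral_eq_sub_of_hasDerivAt
    (f := fun x => P x ^ 2 * Real.exp (Q x)) (f' := φ')
    (fun x _ => hφ x) (hcont.intervalIntegrable a b)
  have hPb : P b = c := by rw [hPdef]; simp
  have hQb : Q b = 0 := by rw [hQdef]; simp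
  have h6 : ∫ s in a..b, (2 * P s * p s + P s ^ 2 * q s) * Real.exp (Q s)
      = ∫ s in a..b, -φ' s := by
    refine intervalIntegral.integral_congr fun s _ => ?_
    rw [hφ'def]; ring
  rw [h6, intervalIntegral.integral_neg, hFTC]
  simp only [hPb, hQb, Real.exp_zero]
  ring

/-- FTC identity for globally integrable data, by approximation. -/
private lemma key_global (b c : ℝ) (p q : ℝ → ℝ) (hp : Integrable p) (hq : Integrable q)
    (a : ℝ) :
    (c + ∫ u in a..b, p u) ^ 2 * Real.exp (∫ u in a..b, q u) - c ^ 2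
      = ∫ s in a..b, (2 * (c + ∫ u in s..b, p u) * p s
          + (c + ∫ u in s..b, p u) ^ 2 * q s) * Real.exp (∫ u in s..b, q u) := by
  set P : ℝ → ℝ := fun s => c + ∫ u in s..b, p u with hPdef
  set Q : ℝ → ℝ := fun s => ∫ u in s..b, q u with hQdef
  set G : ℝ → ℝ := fun s => (2 * P s * p s + P s ^ 2 * q s) * Real.exp (Q s) with hGdef
  show P a ^ 2 * Real.exp (Q a) - c ^ 2 = ∫ s in a..b, G s
  -- constants
  set np : ℝ := ∫ x, |p x| with hnp
  set nq : ℝ := ∫ x, |q x| with hnq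
  have hnp0 : 0 ≤ np := by rw [hnp]; exact integral_nonneg fun x => abs_nonneg _
  have hnq0 : 0 ≤ nq := by rw [hnq]; exact integral_nonneg fun x => abs_nonneg _
  set M : ℝ := |c| + np + 1 with hMdef
  set K : ℝ := nq + 1 with hKdef
  set E : ℝ := Real.exp K with hEdef
  have hM1 : 1 ≤ M := by rw [hMdef]; linarith [abs_nonneg c]
  have hM0 : 0 ≤ M := by linarith
  have hE1 : 1 ≤ E := by rw [hEdef]; exact Real.one_le_exp (by rw [hKdef]; positivity)
  have hE0 : 0 ≤ E := by linarith
  -- uniform bounds on P and Q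
  have hPbound : ∀ s, |P s| ≤ M := by
    intro s
    have h1 : |∫ u in s..b, p u| ≤ np := by
      rw [hnp]
      simpa [Real.norm_eq_abs] using abs_intervalIntegral_le_global hp s b
    calc |P s| ≤ |c| + |∫ u in s..b, p u| := abs_add_le _ _
      _ ≤ M := by rw [hMdef]; linarith
  have hQbound : ∀ s, |Q s| ≤ K := by
    intro s
    have h1 : |∫ u in s..b, q u| ≤ nq := by
      rw [hnq]
      simpa [Real.norm_eq_abs] using abs_intervalIntegral_le_global hq s b
    rw [hKdef]; calc |Q s| ≤ nq := h1
      _ ≤ nq + 1 := by linarith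
  have hEQ : ∀ s, Real.exp (Q s) ≤ E := by
    intro s
    rw [hEdef]
    exact Real.exp_le_exp.2 ((le_abs_self _).trans (hQbound s))
  -- continuity of P and Q
  have hPc : Continuous P := by
    have h := intervalIntegral.continuous_primitive (fun a b => hp.intervalIntegrable) b
    have h3 : P = fun x => c + -(∫ u in b..x, p u) := by
      funext x; rw [hPdef]; simp [intervalIntegral.integral_symm b x]
    rw [h3]
    exact continuous_const.add h.neg
  have hQc : Continuous Q := by
    have h := intervalIntegral.continuous_primitive (fun a b => hq.intervalIntegrable) b
    have h3 : Q = fun x => -(∫ u in b..x, q u) := by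
      funext x; rw [hQdef]; simp [intervalIntegral.integral_symm b x]
    rw [h3]
    exact h.neg
  -- integrability of G
  have hGint : Integrable G := by
    have h1 : Integrable (fun s => (2 * P s * Real.exp (Q s)) * p s) :=
      hp.bdd_mul (c := 2 * M * E)
        (((continuous_const.mul hPc).mul (Real.continuous_exp.comp hQc)).aestronglyMeasurable)
        (Filter.Eventually.of_forall fun s => by
          have := abs_mul_le' (hPbound s)
            (show |Real.exp (Q s)| ≤ E by
              rw [abs_of_pos (Real.exp_pos _)]; exact hEQ s) hM0
          calc ‖2 * P s * Real.exp (Q s)‖ = |2 * (P s * Real.exp (Q s))| := by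
                rw [Real.norm_eq_abs]; ring_nf
            _ = 2 * |P s * Real.exp (Q s)| := by rw [abs_mul]; norm_num
            _ ≤ 2 * (M * E) := by linarith
            _ = 2 * M * E := by ring)
    have h2 : Integrable (fun s => (P s ^ 2 * Real.exp (Q s)) * q s) :=
      hq.bdd_mul (c := M ^ 2 * E)
        (((hPc.pow 2).mul (Real.continuous_exp.comp hQc)).aestronglyMeasurable)
        (Filter.Eventually.of_forall fun s => by
          have hp2 : |P s ^ 2| ≤ M ^ 2 := by
            rw [abs_pow]
            exact pow_le_pow_left₀ (abs_nonneg _) (hPbound s) 2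
          have := abs_mul_le' hp2
            (show |Real.exp (Q s)| ≤ E by
              rw [abs_of_pos (Real.exp_pos _)]; exact hEQ s) (by positivity)
          rw [Real.norm_eq_abs]
          exact this)
    have h3 : G = fun s => (2 * P s * Real.exp (Q s)) * p s
        + (P s ^ 2 * Real.exp (Q s)) * q s := by
      funext s; rw [hGdef]; ring
    rw [h3]
    exact h1.add h2
  -- the constant in the approximation bound
  set C₀ : ℝ := 4 * M ^ 2 * E + (2 * M * E + 6 * M * E * np + M ^ 2 * E + 4 * M ^ 2 * E * nq) + 1
    with hC₀def
  have hC₀pos : 0 < C₀ := by rw [hC₀def]; positivity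
  -- main approximation estimate
  have main : ∀ ε : ℝ, 0 < ε → ε ≤ 1 →
      |P a ^ 2 * Real.exp (Q a) - c ^ 2 - ∫ s in a..b, G s| ≤ C₀ * ε := by
    intro ε hε hε1
    obtain ⟨p', _, hp'err, hp'cont, hp'int⟩ :=
      hp.exists_hasCompactSupport_integral_sub_le hε
    obtain ⟨q', _, hq'err, hq'cont, hq'int⟩ :=
      hq.exists_hasCompactSupport_integral_sub_le hε
    set P' : ℝ → ℝ := fun s => c + ∫ u in s..b, p' u with hP'def
    set Q' : ℝ → ℝ := fun s => ∫ u in s..b, q' u with hQ'def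
    set G' : ℝ → ℝ := fun s => (2 * P' s * p' s + P' s ^ 2 * q' s) * Real.exp (Q' s) with hG'def
    have keyC : P' a ^ 2 * Real.exp (Q' a) - c ^ 2 = ∫ s in a..b, G' s :=
      key_cont b c p' q' hp'cont hq'cont a
    -- pointwise error bounds
    have hdiffP : ∀ s, |P' s - P s| ≤ ε := by
      intro s
      have h1 : P' s - P s = ∫ u in s..b, (p' u - p u) := by
        rw [hP'def, hPdef]
        simp only []
        rw [intervalIntegral.integral_sub hp'int.intervalIntegrable hp.intervalIntegrable]
        ring
      rw [h1]
      refine (abs_intervalIntegral_le_global (hp'int.sub hp) s b).trans ?_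
      calc ∫ x, ‖p' x - p x‖ = ∫ x, ‖p x - p' x‖ := by
            congr 1; funext x; rw [norm_sub_rev]
        _ ≤ ε := hp'err
    have hdiffQ : ∀ s, |Q' s - Q s| ≤ ε := by
      intro s
      have h1 : Q' s - Q s = ∫ u in s..b, (q' u - q u) := by
        rw [hQ'def, hQdef]
        simp only []
        rw [intervalIntegral.integral_sub hq'int.intervalIntegrable hq.intervalIntegrable]
      rw [h1]
      refine (abs_intervalIntegral_le_global (hq'int.sub hq) s b).trans ?_
      calc ∫ x, ‖q' x - q x‖ = ∫ x, ‖q x - q' x‖ := by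
            congr 1; funext x; rw [norm_sub_rev]
        _ ≤ ε := hq'err
    have hP'bound : ∀ s, |P' s| ≤ M := by
      intro s
      have h1 := abs_sub_abs_le_abs_sub (P' s) (P s)
      have h2 := hdiffP s
      have h3 := hPbound s
      have h4 : |P s| ≤ |c| + np := by
        have h5 : |∫ u in s..b, p u| ≤ np := by
          rw [hnp]
          simpa [Real.norm_eq_abs] using abs_intervalIntegral_le_global hp s b
        calc |P s| ≤ |c| + |∫ u in s..b, p u| := abs_add_le _ _
          _ ≤ |c| + np := by linarith
      rw [hMdef]; linarith
    have hQ'bound : ∀ s, |Q' s| ≤ K := by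
      intro s
      have h1 := abs_sub_abs_le_abs_sub (Q' s) (Q s)
      have h2 := hdiffQ s
      have h4 : |Q s| ≤ nq := by
        rw [hnq]
        simpa [Real.norm_eq_abs] using abs_intervalIntegral_le_global hq s b
      rw [hKdef]; linarith
    have hEQ' : ∀ s, Real.exp (Q' s) ≤ E := by
      intro s
      rw [hEdef]
      exact Real.exp_le_exp.2 ((le_abs_self _).trans (hQ'bound s))
    have hexp : ∀ s, |Real.exp (Q' s) - Real.exp (Q s)| ≤ 2 * E * ε := by
      intro s
      have h1 : Real.exp (Q' s) - Real.exp (Q s)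
          = Real.exp (Q s) * (Real.exp (Q' s - Q s) - 1) := by
        rw [mul_sub, mul_one, ← Real.exp_add]
        have : Q s + (Q' s - Q s) = Q' s := by ring
        rw [this]
      rw [h1, abs_mul, abs_of_pos (Real.exp_pos _)]
      have h2 : |Real.exp (Q' s - Q s) - 1| ≤ 2 * |Q' s - Q s| :=
        Real.abs_exp_sub_one_le ((hdiffQ s).trans hε1)
      have h3 : |Q' s - Q s| ≤ ε := hdiffQ s
      have h4 : Real.exp (Q s) ≤ E := hEQ s
      have h5 : (0:ℝ) < Real.exp (Q s) := Real.exp_pos _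
      nlinarith [abs_nonneg (Real.exp (Q' s - Q s) - 1)]
    have hA : ∀ s, |P' s * Real.exp (Q' s) - P s * Real.exp (Q s)| ≤ 3 * M * E * ε := by
      intro s
      have e1 : P' s * Real.exp (Q' s) - P s * Real.exp (Q s)
          = (P' s - P s) * Real.exp (Q' s) + P s * (Real.exp (Q' s) - Real.exp (Q s)) := by ring
      rw [e1]
      refine (abs_add_le _ _).trans ?_
      have t1 : |(P' s - P s) * Real.exp (Q' s)| ≤ ε * E :=
        abs_mul_le' (hdiffP s)
          (by rw [abs_of_pos (Real.exp_pos _)]; exact hEQ' s) hε.le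
      have t2 : |P s * (Real.exp (Q' s) - Real.exp (Q s))| ≤ M * (2 * E * ε) :=
        abs_mul_le' (hPbound s) (hexp s) hM0
      nlinarith [mul_nonneg (mul_nonneg (sub_nonneg.mpr hM1) hE0) hε.le]
    have hB : ∀ s, |P' s ^ 2 * Real.exp (Q' s) - P s ^ 2 * Real.exp (Q s)|
        ≤ 4 * M ^ 2 * E * ε := by
      intro s
      have e1 : P' s ^ 2 * Real.exp (Q' s) - P s ^ 2 * Real.exp (Q s)
          = ((P' s - P s) * (P' s + P s)) * Real.exp (Q' s)
            + P s ^ 2 * (Real.exp (Q' s) - Real.exp (Q s)) := by ring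
      rw [e1]
      refine (abs_add_le _ _).trans ?_
      have hsum : |P' s + P s| ≤ 2 * M := by
        calc |P' s + P s| ≤ |P' s| + |P s| := abs_add_le _ _
          _ ≤ 2 * M := by have := hP'bound s; have := hPbound s; linarith
      have t1 : |((P' s - P s) * (P' s + P s)) * Real.exp (Q' s)| ≤ (ε * (2 * M)) * E :=
        abs_mul_le' (abs_mul_le' (hdiffP s) hsum hε.le)
          (by rw [abs_of_pos (Real.exp_pos _)]; exact hEQ' s) (by positivity)
      have hp2 : |P s ^ 2| ≤ M ^ 2 := by
        rw [abs_pow]; exact pow_le_pow_left₀ (abs_nonneg _) (hPbound s) 2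
      have t2 : |P s ^ 2 * (Real.exp (Q' s) - Real.exp (Q s))| ≤ M ^ 2 * (2 * E * ε) :=
        abs_mul_le' hp2 (hexp s) (by positivity)
      nlinarith [mul_nonneg (mul_nonneg (mul_nonneg hM0 (sub_nonneg.mpr hM1)) hE0) hε.le]
    -- pointwise bound on G' - G
    set h : ℝ → ℝ := fun x => 2 * M * E * |p' x - p x| + 6 * M * E * ε * |p x|
        + M ^ 2 * E * |q' x - q x| + 4 * M ^ 2 * E * ε * |q x| with hhdef
    have hGG' : ∀ s, |G' s - G s| ≤ h s := by
      intro s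
      have e1 : G' s - G s =
          (2 * (P' s * Real.exp (Q' s))) * (p' s - p s)
          + (2 * p s) * (P' s * Real.exp (Q' s) - P s * Real.exp (Q s))
          + (P' s ^ 2 * Real.exp (Q' s)) * (q' s - q s)
          + q s * (P' s ^ 2 * Real.exp (Q' s) - P s ^ 2 * Real.exp (Q s)) := by
        rw [hG'def, hGdef]; ring
      have habs4 : |G' s - G s| ≤
          |(2 * (P' s * Real.exp (Q' s))) * (p' s - p s)|
          + |(2 * p s) * (P' s * Real.exp (Q' s) - P s * Real.exp (Q s))|
          + |(P' s ^ 2 * Real.exp (Q' s)) * (q' s - q s)|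
          + |q s * (P' s ^ 2 * Real.exp (Q' s) - P s ^ 2 * Real.exp (Q s))| := by
        rw [e1]
        exact abs_add₄ _ _ _ _
      have t1 : |(2 * (P' s * Real.exp (Q' s))) * (p' s - p s)|
          ≤ 2 * M * E * |p' s - p s| := by
        have h1 : |2 * (P' s * Real.exp (Q' s))| ≤ 2 * (M * E) := by
          rw [abs_mul, abs_two]
          have := abs_mul_le' (hP'bound s)
            (show |Real.exp (Q' s)| ≤ E by
              rw [abs_of_pos (Real.exp_pos _)]; exact hEQ' s) hM0
          linarith
        calc |(2 * (P' s * Real.exp (Q' s))) * (p' s - p s)|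
            ≤ (2 * (M * E)) * |p' s - p s| := abs_mul_le' h1 le_rfl (by positivity)
          _ = 2 * M * E * |p' s - p s| := by ring
      have t2 : |(2 * p s) * (P' s * Real.exp (Q' s) - P s * Real.exp (Q s))|
          ≤ 6 * M * E * ε * |p s| := by
        calc |(2 * p s) * (P' s * Real.exp (Q' s) - P s * Real.exp (Q s))|
            = |2 * p s| * |P' s * Real.exp (Q' s) - P s * Real.exp (Q s)| := abs_mul _ _
          _ ≤ |2 * p s| * (3 * M * E * ε) :=
              mul_le_mul_of_nonneg_left (hA s) (abs_nonneg _)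
          _ = (2 * |p s|) * (3 * M * E * ε) := by rw [abs_mul, abs_two]
          _ = 6 * M * E * ε * |p s| := by ring
      have t3 : |(P' s ^ 2 * Real.exp (Q' s)) * (q' s - q s)|
          ≤ M ^ 2 * E * |q' s - q s| := by
        have hp2 : |P' s ^ 2| ≤ M ^ 2 := by
          rw [abs_pow]; exact pow_le_pow_left₀ (abs_nonneg _) (hP'bound s) 2
        have h1 : |P' s ^ 2 * Real.exp (Q' s)| ≤ M ^ 2 * E :=
          abs_mul_le' hp2
            (by rw [abs_of_pos (Real.exp_pos _)]; exact hEQ' s) (by positivity)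
        exact abs_mul_le' h1 le_rfl (by positivity)
      have t4 : |q s * (P' s ^ 2 * Real.exp (Q' s) - P s ^ 2 * Real.exp (Q s))|
          ≤ 4 * M ^ 2 * E * ε * |q s| := by
        calc |q s * (P' s ^ 2 * Real.exp (Q' s) - P s ^ 2 * Real.exp (Q s))|
            = |q s| * |P' s ^ 2 * Real.exp (Q' s) - P s ^ 2 * Real.exp (Q s)| := abs_mul _ _
          _ ≤ |q s| * (4 * M ^ 2 * E * ε) :=
              mul_le_mul_of_nonneg_left (hB s) (abs_nonneg _)
          _ = 4 * M ^ 2 * E * ε * |q s| := by ring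
      rw [hhdef]
      dsimp only
      linarith
    -- integrability facts for G'
    have hG'int : Integrable G' := by
      have h1 : Integrable (fun s => (2 * P' s * Real.exp (Q' s)) * p' s) :=
        hp'int.bdd_mul (c := 2 * (M * E))
          (by
            have hP'c : Continuous P' := by
              have h := intervalIntegral.continuous_primitive
                (fun a b => hp'int.intervalIntegrable) b
              have h3 : P' = fun x => c + -(∫ u in b..x, p' u) := by
                funext x; rw [hP'def]; simp [intervalIntegral.integral_symm b x]
              rw [h3]; exact continuous_const.add h.neg
            have hQ'c : Continuous Q' := by
              have h := intervalIntegral.continuous_primitive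
                (fun a b => hq'int.intervalIntegrable) b
              have h3 : Q' = fun x => -(∫ u in b..x, q' u) := by
                funext x; rw [hQ'def]; simp [intervalIntegral.integral_symm b x]
              rw [h3]; exact h.neg
            exact ((continuous_const.mul hP'c).mul
              (Real.continuous_exp.comp hQ'c)).aestronglyMeasurable)
          (Filter.Eventually.of_forall fun s => by
            have h1 : |2 * P' s * Real.exp (Q' s)| ≤ 2 * (M * E) := by
              have := abs_mul_le' (hP'bound s)
                (show |Real.exp (Q' s)| ≤ E by
                  rw [abs_of_pos (Real.exp_pos _)]; exact hEQ' s) hM0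
              calc |2 * P' s * Real.exp (Q' s)| = |2 * (P' s * Real.exp (Q' s))| := by ring_nf
                _ = 2 * |P' s * Real.exp (Q' s)| := by rw [abs_mul]; norm_num
                _ ≤ 2 * (M * E) := by linarith
            rw [Real.norm_eq_abs]; exact h1)
      have h2 : Integrable (fun s => (P' s ^ 2 * Real.exp (Q' s)) * q' s) :=
        hq'int.bdd_mul (c := M ^ 2 * E)
          (by
            have hP'c : Continuous P' := by
              have h := intervalIntegral.continuous_primitive
                (fun a b => hp'int.intervalIntegrable) b
              have h3 : P' = fun x => c + -(∫ u in b..x, p' u) := by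
                funext x; rw [hP'def]; simp [intervalIntegral.integral_symm b x]
              rw [h3]; exact continuous_const.add h.neg
            have hQ'c : Continuous Q' := by
              have h := intervalIntegral.continuous_primitive
                (fun a b => hq'int.intervalIntegrable) b
              have h3 : Q' = fun x => -(∫ u in b..x, q' u) := by
                funext x; rw [hQ'def]; simp [intervalIntegral.integral_symm b x]
              rw [h3]; exact h.neg
            exact ((hP'c.pow 2).mul
              (Real.continuous_exp.comp hQ'c)).aestronglyMeasurable)
          (Filter.Eventually.of_forall fun s => by
            have hp2 : |P' s ^ 2| ≤ M ^ 2 := by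
              rw [abs_pow]; exact pow_le_pow_left₀ (abs_nonneg _) (hP'bound s) 2
            have h1 := abs_mul_le' hp2
              (show |Real.exp (Q' s)| ≤ E by
                rw [abs_of_pos (Real.exp_pos _)]; exact hEQ' s) (by positivity)
            rw [Real.norm_eq_abs]; exact h1)
      have h3 : G' = fun s => (2 * P' s * Real.exp (Q' s)) * p' s
          + (P' s ^ 2 * Real.exp (Q' s)) * q' s := by
        funext s; rw [hG'def]; ring
      rw [h3]; exact h1.add h2
    -- integrability of h
    have hhint : Integrable h := by
      rw [hhdef]
      exact ((((hp'int.sub hp).abs.const_mul _).add (hp.abs.const_mul _)).add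
        ((hq'int.sub hq).abs.const_mul _)).add ((hq.abs.const_mul _))
    have hhnonneg : ∀ x, 0 ≤ h x := by
      intro x
      rw [hhdef]
      dsimp only
      have h1 : (0:ℝ) ≤ 2 * M * E := by positivity
      have h2 : (0:ℝ) ≤ 6 * M * E * ε := by positivity
      have h3 : (0:ℝ) ≤ M ^ 2 * E := by positivity
      have h4 : (0:ℝ) ≤ 4 * M ^ 2 * E * ε := by positivity
      have := abs_nonneg (p' x - p x)
      have := abs_nonneg (p x)
      have := abs_nonneg (q' x - q x)
      have := abs_nonneg (q x)
      nlinarith [mul_nonneg h1 (abs_nonneg (p' x - p x)),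
        mul_nonneg h2 (abs_nonneg (p x)),
        mul_nonneg h3 (abs_nonneg (q' x - q x)),
        mul_nonneg h4 (abs_nonneg (q x))]
    -- bound the difference of integrals
    have hRHS : |(∫ s in a..b, G' s) - ∫ s in a..b, G s| ≤ ∫ x, h x := by
      rw [← intervalIntegral.integral_sub hG'int.intervalIntegrable hGint.intervalIntegrable]
      have h1 : ‖∫ s in a..b, (G' s - G s)‖ ≤ ∫ x in Set.uIoc a b, ‖G' x - G x‖ :=
        intervalIntegral.norm_integral_le_integral_norm_uIoc
      rw [← Real.norm_eq_abs]
      refine h1.trans ?_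
      have h2 : ∫ x in Set.uIoc a b, ‖G' x - G x‖ ≤ ∫ x in Set.uIoc a b, h x := by
        refine setIntegral_mono_on ((hG'int.sub hGint).norm.integrableOn)
          hhint.integrableOn measurableSet_uIoc fun x _ => ?_
        simpa [Real.norm_eq_abs] using hGG' x
      refine h2.trans ?_
      exact setIntegral_le_integral hhint (Filter.Eventually.of_forall hhnonneg)
    have hIh : ∫ x, h x ≤ 2 * M * E * ε + 6 * M * E * ε * np + M ^ 2 * E * ε
        + 4 * M ^ 2 * E * ε * nq := by
      have i1 : Integrable (fun x => 2 * M * E * |p' x - p x|) :=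
        (hp'int.sub hp).abs.const_mul _
      have i2 : Integrable (fun x => 6 * M * E * ε * |p x|) := hp.abs.const_mul _
      have i3 : Integrable (fun x => M ^ 2 * E * |q' x - q x|) :=
        (hq'int.sub hq).abs.const_mul _
      have i4 : Integrable (fun x => 4 * M ^ 2 * E * ε * |q x|) := hq.abs.const_mul _
      have i12 : Integrable (fun x => 2 * M * E * |p' x - p x|
          + 6 * M * E * ε * |p x|) := i1.add i2
      have i123 : Integrable (fun x => 2 * M * E * |p' x - p x|
          + 6 * M * E * ε * |p x| + M ^ 2 * E * |q' x - q x|) := i12.add i3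
      have hsplit : ∫ x, h x = (∫ x, 2 * M * E * |p' x - p x|)
          + (∫ x, 6 * M * E * ε * |p x|) + (∫ x, M ^ 2 * E * |q' x - q x|)
          + (∫ x, 4 * M ^ 2 * E * ε * |q x|) := by
        simp only [hhdef]
        rw [integral_add i123 i4, integral_add i12 i3, integral_add i1 i2]
      rw [hsplit]
      have e1 : ∫ x, 2 * M * E * |p' x - p x| = 2 * M * E * ∫ x, |p' x - p x| :=
        integral_const_mul _ _
      have e2 : ∫ x, 6 * M * E * ε * |p x| = 6 * M * E * ε * np := by
        rw [MeasureTheory.integral_const_mul, hnp]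
      have e3 : ∫ x, M ^ 2 * E * |q' x - q x| = M ^ 2 * E * ∫ x, |q' x - q x| :=
        integral_const_mul _ _
      have e4 : ∫ x, 4 * M ^ 2 * E * ε * |q x| = 4 * M ^ 2 * E * ε * nq := by
        rw [MeasureTheory.integral_const_mul, hnq]
      rw [e1, e2, e3, e4]
      have b1 : ∫ x, |p' x - p x| ≤ ε := by
        calc ∫ x, |p' x - p x| = ∫ x, ‖p x - p' x‖ := by
              congr 1; funext x; rw [Real.norm_eq_abs, abs_sub_comm]
          _ ≤ ε := hp'err
      have b2 : ∫ x, |q' x - q x| ≤ ε := by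
        calc ∫ x, |q' x - q x| = ∫ x, ‖q x - q' x‖ := by
              congr 1; funext x; rw [Real.norm_eq_abs, abs_sub_comm]
          _ ≤ ε := hq'err
      have c1 : (0:ℝ) ≤ 2 * M * E := by positivity
      have c3 : (0:ℝ) ≤ M ^ 2 * E := by positivity
      nlinarith [mul_le_mul_of_nonneg_left b1 c1, mul_le_mul_of_nonneg_left b2 c3]
    -- combine
    have hLHS : |P a ^ 2 * Real.exp (Q a) - P' a ^ 2 * Real.exp (Q' a)| ≤ 4 * M ^ 2 * E * ε := by
      rw [abs_sub_comm]; exact hB a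
    calc |P a ^ 2 * Real.exp (Q a) - c ^ 2 - ∫ s in a..b, G s|
        = |(P a ^ 2 * Real.exp (Q a) - P' a ^ 2 * Real.exp (Q' a))
            + ((∫ s in a..b, G' s) - ∫ s in a..b, G s)| := by
          rw [← keyC]; congr 1; ring
      _ ≤ |P a ^ 2 * Real.exp (Q a) - P' a ^ 2 * Real.exp (Q' a)|
            + |(∫ s in a..b, G' s) - ∫ s in a..b, G s| := abs_add_le _ _
      _ ≤ 4 * M ^ 2 * E * ε + (2 * M * E * ε + 6 * M * E * ε * np + M ^ 2 * E * ε
            + 4 * M ^ 2 * E * ε * nq) := by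
          have := hRHS.trans hIh
          linarith [hLHS]
      _ ≤ C₀ * ε := by rw [hC₀def]; nlinarith
  -- conclude equality from the estimate
  by_contra hne
  have h0 : 0 < |P a ^ 2 * Real.exp (Q a) - c ^ 2 - ∫ s in a..b, G s| := by
    rw [abs_pos, sub_ne_zero]
    exact hne
  set X : ℝ := |P a ^ 2 * Real.exp (Q a) - c ^ 2 - ∫ s in a..b, G s| with hXdef
  have hε0 : 0 < min 1 (X / (2 * C₀)) := lt_min one_pos (by positivity)
  have hε1 : min 1 (X / (2 * C₀)) ≤ 1 := min_le_left _ _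
  have hmain := main _ hε0 hε1
  have h2 : C₀ * min 1 (X / (2 * C₀)) ≤ C₀ * (X / (2 * C₀)) :=
    mul_le_mul_of_nonneg_left (min_le_right _ _) hC₀pos.le
  have h3 : C₀ * (X / (2 * C₀)) = X / 2 := by field_simp
  linarith

/-- FTC identity for data integrable on `[a,b]`. -/
private lemma key_loc (a b c : ℝ) (hab : a ≤ b) (p q : ℝ → ℝ)
    (hp : IntegrableOn p (Set.Icc a b)) (hq : IntegrableOn q (Set.Icc a b)) :
    (c + ∫ u in a..b, p u) ^ 2 * Real.exp (∫ u in a..b, q u) - c ^ 2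
      = ∫ s in a..b, (2 * (c + ∫ u in s..b, p u) * p s
          + (c + ∫ u in s..b, p u) ^ 2 * q s) * Real.exp (∫ u in s..b, q u) := by
  set p' : ℝ → ℝ := (Set.Icc a b).indicator p with hp'def
  set q' : ℝ → ℝ := (Set.Icc a b).indicator q with hq'def
  have hp' : Integrable p' := by
    rw [hp'def]; exact (integrable_indicator_iff measurableSet_Icc).mpr hp
  have hq' : Integrable q' := by
    rw [hq'def]; exact (integrable_indicator_iff measurableSet_Icc).mpr hq
  have key' := key_global b c p' q' hp' hq' a
  have hPs : ∀ s ∈ Set.Icc a b, (∫ u in s..b, p' u) = ∫ u in s..b, p u := by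
    intro s hs
    refine intervalIntegral.integral_congr fun u hu => ?_
    have hu' : u ∈ Set.Icc a b := by
      rw [Set.uIcc_of_le hs.2] at hu
      exact ⟨hs.1.trans hu.1, hu.2⟩
    rw [hp'def]
    exact Set.indicator_of_mem hu' p
  have hQs : ∀ s ∈ Set.Icc a b, (∫ u in s..b, q' u) = ∫ u in s..b, q u := by
    intro s hs
    refine intervalIntegral.integral_congr fun u hu => ?_
    have hu' : u ∈ Set.Icc a b := by
      rw [Set.uIcc_of_le hs.2] at hu
      exact ⟨hs.1.trans hu.1, hu.2⟩
    rw [hq'def]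
    exact Set.indicator_of_mem hu' q
  have ha : a ∈ Set.Icc a b := Set.left_mem_Icc.mpr hab
  rw [← hPs a ha, ← hQs a ha, key']
  refine intervalIntegral.integral_congr fun s hs => ?_
  have hs' : s ∈ Set.Icc a b := by rwa [Set.uIcc_of_le hab] at hs
  rw [hPs s hs', hQs s hs']
  have hps : p' s = p s := by rw [hp'def]; exact Set.indicator_of_mem hs' p
  have hqs : q' s = q s := by rw [hq'def]; exact Set.indicator_of_mem hs' q
  rw [hps, hqs]

private lemma integrableOn_bdd_mul {u v : ℝ → ℝ} {s : Set ℝ} (hmeas : MeasurableSet s)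
    (hv : IntegrableOn v s) (hu : ContinuousOn u s) (C : ℝ) (hC : ∀ x ∈ s, |u x| ≤ C) :
    IntegrableOn (fun x => u x * v x) s :=
  Integrable.bdd_mul hv (hu.aestronglyMeasurable hmeas)
    (by
      filter_upwards [ae_restrict_mem hmeas] with x hx
      simpa [Real.norm_eq_abs] using hC x hx)

/-- A priori bound for the exponentially weighted square: if `y(T) = ξ`,
`y' = -g` a.e., and `2 y g ≤ d y² + f² - z²` a.e. on `[0,T]`, then
`y(t)² e^{∫₀^t d} + ∫_t^T e^{∫₀^s d} z² ≤ ξ² e^{∫₀^T d} + ∫_t^T e^{∫₀^s d} f²`. -/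
theorem exponential_weighted_square_bound
    (T : ℝ) (hT : 0 < T) (ξ : ℝ) (d f z g : ℝ → ℝ)
    (hd : IntegrableOn d (Set.Icc 0 T))
    (hf2 : IntegrableOn (fun s => (f s) ^ 2) (Set.Icc 0 T))
    (hz2 : IntegrableOn (fun s => (z s) ^ 2) (Set.Icc 0 T))
    (hg : IntegrableOn g (Set.Icc 0 T))
    (y : ℝ → ℝ)
    -- y is absolutely continuous with y(T) = ξ and y' = -g a.e., i.e.
    (hy : ∀ t ∈ Set.Icc (0 : ℝ) T, y t = ξ + ∫ s in t..T, g s)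
    (hineq : ∀ᵐ s ∂(volume.restrict (Set.Icc (0 : ℝ) T)),
      2 * y s * g s ≤ d s * (y s) ^ 2 + (f s) ^ 2 - (z s) ^ 2) :
    ∀ t ∈ Set.Icc (0 : ℝ) T,
      (y t) ^ 2 * Real.exp (∫ u in (0 : ℝ)..t, d u)
        + (∫ s in t..T, Real.exp (∫ u in (0 : ℝ)..s, d u) * (z s) ^ 2)
      ≤ ξ ^ 2 * Real.exp (∫ u in (0 : ℝ)..T, d u)
        + ∫ s in t..T, Real.exp (∫ u in (0 : ℝ)..s, d u) * (f s) ^ 2 := by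
  intro t ht
  obtain ⟨ht0, htT⟩ := ht
  set Y : ℝ → ℝ := fun s => ξ + ∫ u in s..T, g u with hYdef
  set α : ℝ → ℝ := fun s => ∫ u in (0:ℝ)..s, d u with hαdef
  -- the exponential splitting
  have hC : ∀ s ∈ Set.Icc (0:ℝ) T,
      Real.exp (α s) = Real.exp (α T) * Real.exp (∫ u in s..T, -d u) := by
    intro s hs
    rw [intervalIntegral.integral_neg, ← Real.exp_add]
    congr 1
    have h0s : IntervalIntegrable d volume 0 s := by
      apply IntegrableOn.intervalIntegrable
      rw [Set.uIcc_of_le hs.1]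
      exact hd.mono_set (Set.Icc_subset_Icc le_rfl hs.2)
    have hsT : IntervalIntegrable d volume s T := by
      apply IntegrableOn.intervalIntegrable
      rw [Set.uIcc_of_le hs.2]
      exact hd.mono_set (Set.Icc_subset_Icc hs.1 le_rfl)
    have hadd := intervalIntegral.integral_add_adjacent_intervals h0s hsT
    rw [hαdef]
    dsimp only
    linarith
  -- the key identity
  have hg' : IntegrableOn g (Set.Icc t T) := hg.mono_set (Set.Icc_subset_Icc ht0 le_rfl)
  have hd'' : IntegrableOn (fun s => -d s) (Set.Icc t T) :=
    (hd.mono_set (Set.Icc_subset_Icc ht0 le_rfl)).neg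
  have hkey := key_loc t T ξ htT g (fun s => -d s) hg' hd''
  -- hkey : Y t ^2 * exp (∫ t..T, -d) - ξ^2 = ∫ s in t..T, (2 Y g + Y² (-d)) exp (∫ s..T, -d)
  have hid : Y t ^ 2 * Real.exp (α t)
      = ξ ^ 2 * Real.exp (α T)
        + ∫ s in t..T, (2 * Y s * g s - d s * Y s ^ 2) * Real.exp (α s) := by
    have e1 : Real.exp (α t) = Real.exp (α T) * Real.exp (∫ u in t..T, -d u) :=
      hC t ⟨ht0, htT⟩
    rw [e1]
    have e2 : Y t ^ 2 * (Real.exp (α T) * Real.exp (∫ u in t..T, -d u))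
        = Real.exp (α T) * (Y t ^ 2 * Real.exp (∫ u in t..T, -d u)) := by ring
    rw [e2]
    have e3 : Y t ^ 2 * Real.exp (∫ u in t..T, -d u)
        = ξ ^ 2 + ∫ s in t..T, (2 * (ξ + ∫ u in s..T, g u) * g s
            + (ξ + ∫ u in s..T, g u) ^ 2 * -d s) * Real.exp (∫ u in s..T, -d u) := by
      rw [hYdef]
      dsimp only
      linarith [hkey]
    rw [e3, mul_add]
    congr 1
    · ring
    rw [← intervalIntegral.integral_const_mul]
    refine intervalIntegral.integral_congr fun s hs => ?_
    have hs' : s ∈ Set.Icc (0:ℝ) T := by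
      rw [Set.uIcc_of_le htT] at hs
      exact ⟨ht0.trans hs.1, hs.2⟩
    have e4 := hC s hs'
    rw [hYdef]
    dsimp only
    rw [e4]
    ring
  have hyt : y t = Y t := hy t ⟨ht0, htT⟩
  show y t ^ 2 * Real.exp (α t) + (∫ s in t..T, Real.exp (α s) * z s ^ 2)
      ≤ ξ ^ 2 * Real.exp (α T) + ∫ s in t..T, Real.exp (α s) * f s ^ 2
  rw [hyt, hid]
  -- now reduce to an integral inequality
  have hIocsub : Set.Ioc t T ⊆ Set.Icc (0:ℝ) T := fun x hx => ⟨ht0.trans hx.1.le, hx.2⟩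
  -- bounds on Y and α on [0, T]
  set Gn : ℝ := ∫ u in Set.Icc (0:ℝ) T, |g u| with hGn
  set Dn : ℝ := ∫ u in Set.Icc (0:ℝ) T, |d u| with hDn
  have habs_int : ∀ (r : ℝ → ℝ), IntegrableOn r (Set.Icc (0:ℝ) T) →
      ∀ s1 s2 : ℝ, s1 ∈ Set.Icc (0:ℝ) T → s2 ∈ Set.Icc (0:ℝ) T → s1 ≤ s2 →
      |∫ u in s1..s2, r u| ≤ ∫ u in Set.Icc (0:ℝ) T, |r u| := by
    intro r hr s1 s2 hs1 hs2 hle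
    rw [intervalIntegral.integral_of_le hle]
    calc |∫ u in Set.Ioc s1 s2, r u| ≤ ∫ u in Set.Ioc s1 s2, |r u| := by
          simpa [Real.norm_eq_abs] using
            MeasureTheory.norm_integral_le_integral_norm (f := r)
              (μ := volume.restrict (Set.Ioc s1 s2))
      _ ≤ ∫ u in Set.Icc (0:ℝ) T, |r u| := by
          refine setIntegral_mono_set hr.abs ?_ ?_
          · exact Filter.Eventually.of_forall fun x => abs_nonneg _
          · exact (Set.Ioc_subset_Icc_self.trans (Set.Icc_subset_Icc hs1.1 hs2.2)).eventuallyLE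
  have hYbound : ∀ s ∈ Set.Icc (0:ℝ) T, |Y s| ≤ |ξ| + Gn := by
    intro s hs
    have h1 : |∫ u in s..T, g u| ≤ Gn :=
      habs_int g hg s T hs (Set.right_mem_Icc.mpr hT.le) hs.2
    calc |Y s| ≤ |ξ| + |∫ u in s..T, g u| := abs_add_le _ _
      _ ≤ |ξ| + Gn := by linarith
  have hαbound : ∀ s ∈ Set.Icc (0:ℝ) T, |α s| ≤ Dn := by
    intro s hs
    exact habs_int d hd 0 s (Set.left_mem_Icc.mpr hT.le) hs hs.1
  have hexpbound : ∀ s ∈ Set.Icc (0:ℝ) T, Real.exp (α s) ≤ Real.exp Dn := by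
    intro s hs
    exact Real.exp_le_exp.2 ((le_abs_self _).trans (hαbound s hs))
  -- continuity of Y and α on [0, T]
  have hYc : ContinuousOn Y (Set.Icc (0:ℝ) T) := by
    have h1 : ContinuousOn (fun x => ∫ u in x..T, g u) (Set.uIcc (0:ℝ) T) :=
      intervalIntegral.continuousOn_primitive_interval_left
        (by rwa [Set.uIcc_of_le hT.le])
    rw [Set.uIcc_of_le hT.le] at h1
    exact continuousOn_const.add h1
  have hαc : ContinuousOn α (Set.Icc (0:ℝ) T) := by
    have h1 : ContinuousOn (fun x => ∫ u in (0:ℝ)..x, d u) (Set.uIcc (0:ℝ) T) :=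
      intervalIntegral.continuousOn_primitive_interval
        (by rwa [Set.uIcc_of_le hT.le])
    rw [Set.uIcc_of_le hT.le] at h1
    exact h1
  have hYcIoc : ContinuousOn Y (Set.Ioc t T) := hYc.mono hIocsub
  have hαcIoc : ContinuousOn α (Set.Ioc t T) := hαc.mono hIocsub
  -- integrability facts on Ioc t T
  have hWint : IntegrableOn (fun s => (2 * Y s * g s - d s * Y s ^ 2) * Real.exp (α s))
      (Set.Ioc t T) := by
    have i1 : IntegrableOn (fun s => (2 * Y s * Real.exp (α s)) * g s) (Set.Ioc t T) := by
      refine integrableOn_bdd_mul measurableSet_Ioc (hg.mono_set hIocsub)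
        ((continuousOn_const.mul hYcIoc).mul (Real.continuous_exp.comp_continuousOn hαcIoc))
        (2 * (|ξ| + Gn) * Real.exp Dn) fun x hx => ?_
      have hx' := hIocsub hx
      have h1 := hYbound x hx'
      have h2 := hexpbound x hx'
      have h3 : (0:ℝ) < Real.exp (α x) := Real.exp_pos _
      calc |2 * Y x * Real.exp (α x)| = 2 * |Y x| * Real.exp (α x) := by
            rw [abs_mul, abs_mul, abs_two, abs_of_pos h3]
        _ ≤ 2 * (|ξ| + Gn) * Real.exp Dn := by
            have h4 : 0 ≤ |Y x| := abs_nonneg _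
            nlinarith
    have i2 : IntegrableOn (fun s => (-(Y s ^ 2 * Real.exp (α s))) * d s) (Set.Ioc t T) := by
      refine integrableOn_bdd_mul measurableSet_Ioc (hd.mono_set hIocsub)
        (((hYcIoc.pow 2).mul (Real.continuous_exp.comp_continuousOn hαcIoc)).neg)
        ((|ξ| + Gn) ^ 2 * Real.exp Dn) fun x hx => ?_
      have hx' := hIocsub hx
      have h1 := hYbound x hx'
      have h2 := hexpbound x hx'
      have h3 : (0:ℝ) < Real.exp (α x) := Real.exp_pos _
      have h4 : |Y x ^ 2| ≤ (|ξ| + Gn) ^ 2 := by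
        rw [abs_pow]
        exact pow_le_pow_left₀ (abs_nonneg _) h1 2
      calc |(-(Y x ^ 2 * Real.exp (α x)))| = |Y x ^ 2| * Real.exp (α x) := by
            rw [abs_neg, abs_mul, abs_of_pos h3]
        _ ≤ (|ξ| + Gn) ^ 2 * Real.exp Dn := by
            have h5 : 0 ≤ |Y x ^ 2| := abs_nonneg _
            nlinarith
    have heq : (fun s => (2 * Y s * g s - d s * Y s ^ 2) * Real.exp (α s))
        = fun s => (2 * Y s * Real.exp (α s)) * g s + (-(Y s ^ 2 * Real.exp (α s))) * d s := by
      funext s; ring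
    rw [heq]
    exact i1.add i2
  have hZint : IntegrableOn (fun s => Real.exp (α s) * z s ^ 2) (Set.Ioc t T) := by
    refine integrableOn_bdd_mul measurableSet_Ioc (hz2.mono_set hIocsub)
      (Real.continuous_exp.comp_continuousOn hαcIoc) (Real.exp Dn) fun x hx => ?_
    rw [abs_of_pos (Real.exp_pos _)]
    exact hexpbound x (hIocsub hx)
  have hFint : IntegrableOn (fun s => Real.exp (α s) * f s ^ 2) (Set.Ioc t T) := by
    refine integrableOn_bdd_mul measurableSet_Ioc (hf2.mono_set hIocsub)
      (Real.continuous_exp.comp_continuousOn hαcIoc) (Real.exp Dn) fun x hx => ?_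
    rw [abs_of_pos (Real.exp_pos _)]
    exact hexpbound x (hIocsub hx)
  -- the integral inequality
  have hmono : (∫ s in t..T, (2 * Y s * g s - d s * Y s ^ 2) * Real.exp (α s))
      + (∫ s in t..T, Real.exp (α s) * z s ^ 2)
      ≤ ∫ s in t..T, Real.exp (α s) * f s ^ 2 := by
    have hWii : IntervalIntegrable (fun s => (2 * Y s * g s - d s * Y s ^ 2) * Real.exp (α s))
        volume t T := by
      rw [intervalIntegrable_iff, Set.uIoc_of_le htT]
      exact hWint
    have hZii : IntervalIntegrable (fun s => Real.exp (α s) * z s ^ 2) volume t T := by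
      rw [intervalIntegrable_iff, Set.uIoc_of_le htT]
      exact hZint
    rw [← intervalIntegral.integral_add hWii hZii, intervalIntegral.integral_of_le htT,
      intervalIntegral.integral_of_le htT]
    refine setIntegral_mono_ae_restrict (hWint.add hZint) hFint ?_
    have hineq' := ae_restrict_of_ae_restrict_of_subset hIocsub hineq
    filter_upwards [hineq', ae_restrict_mem measurableSet_Ioc] with s hs1 hs2
    have hs' : s ∈ Set.Icc (0:ℝ) T := hIocsub hs2
    have hys : y s = Y s := hy s hs'
    rw [hys] at hs1
    have h0 : (0:ℝ) ≤ Real.exp (α s) := (Real.exp_pos _).le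
    calc (2 * Y s * g s - d s * Y s ^ 2) * Real.exp (α s) + Real.exp (α s) * z s ^ 2
        = (2 * Y s * g s - d s * Y s ^ 2 + z s ^ 2) * Real.exp (α s) := by ring
      _ ≤ f s ^ 2 * Real.exp (α s) := by
          refine mul_le_mul_of_nonneg_right ?_ h0
          linarith
      _ = Real.exp (α s) * f s ^ 2 := by ring
  linarith
end
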